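/- For every integer r with 1 ≤ r ≤ T/2, define a_r = Σ_{t=T−r+1}^T Y_t² − Σ_{t=T−2r+1}^{T−r} Y_t², b_r = Σ_{t=T−2r+1}^{T−r} Y_t·X_t − Σ_{t=T−r+1}^T Y_t·X_t ∈ ℝ^d, and the symmetric matrix A_r = Σ_{t=T−r+1}^T X_t X_tᵀ − Σ_{t=T−2r+1}^{T−r} X_t X_tᵀ. Then ‖𝔔_T^r − 𝔔_T^{2r}‖_F = (1/(2r)) · max( a_r + sup_{‖w‖₂ ≤ 1} ( wᵀA_r w + 2·b_rᵀw ), −a_r + sup_{‖w‖₂ ≤ 1} ( −wᵀA_r w − 2·b_rᵀw ) ). -/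
import Mathlib

open MeasureTheory
open scoped RealInnerProductSpace

/-- The squared loss `L_w(x, y) = (y − ⟨x, w⟩)²` of the linear predictor `w`. -/
noncomputable def sqLoss {d : ℕ} (w : EuclideanSpace ℝ (Fin d))
    (z : EuclideanSpace ℝ (Fin d) × ℝ) : ℝ :=
  (z.2 - ⟪z.1, w⟫) ^ 2

/-- `a_r = Σ_{t=T−r+1}^T Y_t² − Σ_{t=T−2r+1}^{T−r} Y_t²`. -/
noncomputable def aR (T r : ℕ) (Y : ℕ → ℝ) : ℝ :=
  ∑ t ∈ Finset.Icc (T - r + 1) T, Y t ^ 2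
    - ∑ t ∈ Finset.Icc (T - 2 * r + 1) (T - r), Y t ^ 2

/-- `b_r = Σ_{t=T−2r+1}^{T−r} Y_t·X_t − Σ_{t=T−r+1}^T Y_t·X_t ∈ ℝ^d`. -/
noncomputable def bR {d : ℕ} (T r : ℕ) (X : ℕ → EuclideanSpace ℝ (Fin d))
    (Y : ℕ → ℝ) : EuclideanSpace ℝ (Fin d) :=
  (∑ t ∈ Finset.Icc (T - 2 * r + 1) (T - r), Y t • X t)
    - ∑ t ∈ Finset.Icc (T - r + 1) T, Y t • X t

/-- The quadratic form `w ↦ wᵀ·A_r·w` of the symmetric matrix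
`A_r = Σ_{t=T−r+1}^T X_t X_tᵀ − Σ_{t=T−2r+1}^{T−r} X_t X_tᵀ`,
namely `wᵀA_r w = Σ_{t=T−r+1}^T ⟨X_t, w⟩² − Σ_{t=T−2r+1}^{T−r} ⟨X_t, w⟩²`. -/
noncomputable def qAR {d : ℕ} (T r : ℕ) (X : ℕ → EuclideanSpace ℝ (Fin d))
    (w : EuclideanSpace ℝ (Fin d)) : ℝ :=
  ∑ t ∈ Finset.Icc (T - r + 1) T, ⟪X t, w⟫ ^ 2
    - ∑ t ∈ Finset.Icc (T - 2 * r + 1) (T - r), ⟪X t, w⟫ ^ 2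

lemma my_add_ciSup {ι : Type*} [Nonempty ι] (f : ι → ℝ) (hf : BddAbove (Set.range f))
    (a : ℝ) : a + ⨆ i, f i = ⨆ i, a + f i :=
  (OrderIso.addLeft a).map_ciSup hf

lemma my_iSup_abs {ι : Type*} [Nonempty ι] (f : ι → ℝ) {M : ℝ} (hM : ∀ i, |f i| ≤ M) :
    (⨆ i, |f i|) = max (⨆ i, f i) (⨆ i, -f i) := by
  have hb1 : BddAbove (Set.range f) :=
    ⟨M, by rintro _ ⟨i, rfl⟩; exact (abs_le.1 (hM i)).2⟩
  have hb2 : BddAbove (Set.range fun i => -f i) :=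
    ⟨M, by rintro _ ⟨i, rfl⟩; have := (abs_le.1 (hM i)).1; simpa using neg_le_neg this⟩
  have hb3 : BddAbove (Set.range fun i => |f i|) := ⟨M, by rintro _ ⟨i, rfl⟩; exact hM i⟩
  apply le_antisymm
  · refine ciSup_le fun i => ?_
    rcases abs_cases (f i) with ⟨h, _⟩ | ⟨h, _⟩
    · rw [h]; exact le_max_of_le_left (le_ciSup hb1 i)
    · rw [h]; exact le_max_of_le_right (le_ciSup hb2 i)
  · exact max_le (ciSup_mono hb3 fun i => le_abs_self _)
      (ciSup_mono hb3 fun i => neg_le_abs _)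

/-- the empirical discrepancy for linear regression with squared
loss equals `(1/(2r))·max(a_r + sup_{‖w‖≤1}(wᵀA_r w + 2 b_rᵀw),
−a_r + sup_{‖w‖≤1}(−wᵀA_r w − 2 b_rᵀw))`. -/
theorem stmt10 (d T : ℕ) (X : ℕ → EuclideanSpace ℝ (Fin d)) (Y : ℕ → ℝ)
    (hX : ∀ t, ‖X t‖ ≤ 1) (hY : ∀ t, Y t ∈ Set.Icc (-1 : ℝ) 1)
    (r : ℕ) (hr1 : 1 ≤ r) (hrT : 2 * r ≤ T) :
    (⨆ w : {w : EuclideanSpace ℝ (Fin d) // ‖w‖ ≤ 1},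
      |(r : ℝ)⁻¹ * ∑ t ∈ Finset.Icc (T - r + 1) T, sqLoss w.1 (X t, Y t)
        - ((2 * r : ℕ) : ℝ)⁻¹ *
            ∑ t ∈ Finset.Icc (T - 2 * r + 1) T, sqLoss w.1 (X t, Y t)|)
      = ((2 * r : ℕ) : ℝ)⁻¹ * max
          (aR T r Y + ⨆ w : {w : EuclideanSpace ℝ (Fin d) // ‖w‖ ≤ 1},
            (qAR T r X w.1 + 2 * ⟪bR T r X Y, w.1⟫))
          (-aR T r Y + ⨆ w : {w : EuclideanSpace ℝ (Fin d) // ‖w‖ ≤ 1},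
            (-qAR T r X w.1 - 2 * ⟪bR T r X Y, w.1⟫)) := by
  haveI : Nonempty {w : EuclideanSpace ℝ (Fin d) // ‖w‖ ≤ 1} :=
    ⟨⟨0, by simp⟩⟩
  set S1 := Finset.Icc (T - r + 1) T with hS1
  set S2 := Finset.Icc (T - 2 * r + 1) (T - r) with hS2
  -- sum split
  have hsplit : ∀ f : ℕ → ℝ,
      ∑ t ∈ Finset.Icc (T - 2 * r + 1) T, f t
        = (∑ t ∈ S2, f t) + ∑ t ∈ S1, f t := by
    intro f
    rw [hS1, hS2, Finset.Icc_add_one_left_eq_Ioc, Finset.Icc_add_one_left_eq_Ioc, Finset.Icc_add_one_left_eq_Ioc]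
    exact (Finset.sum_Ioc_consecutive f (by omega) (by omega)).symm
  -- g
  set g : {w : EuclideanSpace ℝ (Fin d) // ‖w‖ ≤ 1} → ℝ :=
    fun w => qAR T r X w.1 + 2 * ⟪bR T r X Y, w.1⟫ with hg
  -- key identity: sum over S1 minus sum over S2 of sqLoss equals aR + g w
  have hkey : ∀ w : {w : EuclideanSpace ℝ (Fin d) // ‖w‖ ≤ 1},
      (∑ t ∈ S1, sqLoss w.1 (X t, Y t)) - ∑ t ∈ S2, sqLoss w.1 (X t, Y t)
        = aR T r Y + g w := by
    intro w
    have hexp : ∀ s : Finset ℕ, ∑ t ∈ s, sqLoss w.1 (X t, Y t)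
        = (∑ t ∈ s, Y t ^ 2) - 2 * (∑ t ∈ s, Y t * ⟪X t, w.1⟫)
          + ∑ t ∈ s, ⟪X t, w.1⟫ ^ 2 := by
      intro s
      rw [Finset.mul_sum, ← Finset.sum_sub_distrib, ← Finset.sum_add_distrib]
      refine Finset.sum_congr rfl fun t _ => ?_
      simp only [sqLoss]; ring
    have hb : ⟪bR T r X Y, w.1⟫
        = (∑ t ∈ S2, Y t * ⟪X t, w.1⟫) - ∑ t ∈ S1, Y t * ⟪X t, w.1⟫ := by
      simp only [bR, inner_sub_left, sum_inner, real_inner_smul_left, hS1, hS2]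
    rw [hexp, hexp]
    simp only [hg]
    rw [hb]
    simp only [aR, qAR, ← hS1, ← hS2]
    ring
  -- bound: |aR + g w| ≤ 4 * (S1.card + S2.card)
  have hbound : ∀ w : {w : EuclideanSpace ℝ (Fin d) // ‖w‖ ≤ 1},
      |aR T r Y + g w| ≤ 4 * ((S1.card : ℝ) + S2.card) := by
    intro w
    rw [← hkey w]
    have hterm : ∀ t, |sqLoss w.1 (X t, Y t)| ≤ 4 := by
      intro t
      have h1 : |⟪X t, w.1⟫| ≤ 1 := by
        calc |⟪X t, w.1⟫| ≤ ‖X t‖ * ‖w.1‖ := abs_real_inner_le_norm _ _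
        _ ≤ 1 * 1 := by
            apply mul_le_mul (hX t) w.2 (norm_nonneg _) (by linarith [norm_nonneg (X t)])
        _ = 1 := by ring
      have h2 := (hY t).1; have h3 := (hY t).2
      have h4 : |Y t - ⟪X t, w.1⟫| ≤ 2 := by
        rw [abs_le] at h1 ⊢; constructor <;> nlinarith [h1.1, h1.2]
      calc |sqLoss w.1 (X t, Y t)| = |Y t - ⟪X t, w.1⟫| ^ 2 := by
            simp [sqLoss, sq_abs]
      _ ≤ 2 ^ 2 := by nlinarith [abs_nonneg (Y t - ⟪X t, w.1⟫)]
      _ = 4 := by norm_num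
    have hs : ∀ s : Finset ℕ, |∑ t ∈ s, sqLoss w.1 (X t, Y t)| ≤ 4 * s.card := by
      intro s
      calc |∑ t ∈ s, sqLoss w.1 (X t, Y t)| ≤ ∑ t ∈ s, |sqLoss w.1 (X t, Y t)| :=
            Finset.abs_sum_le_sum_abs _ _
      _ ≤ ∑ _t ∈ s, (4:ℝ) := Finset.sum_le_sum fun t _ => hterm t
      _ = 4 * s.card := by rw [Finset.sum_const]; push_cast; ring
    calc |(∑ t ∈ S1, sqLoss w.1 (X t, Y t)) - ∑ t ∈ S2, sqLoss w.1 (X t, Y t)|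
        ≤ |∑ t ∈ S1, sqLoss w.1 (X t, Y t)| + |∑ t ∈ S2, sqLoss w.1 (X t, Y t)| :=
          abs_sub _ _
    _ ≤ 4 * (S1.card : ℝ) + 4 * S2.card := add_le_add (hs S1) (hs S2)
    _ = 4 * ((S1.card : ℝ) + S2.card) := by ring
  -- bddAbove of g and -g
  have hbg : BddAbove (Set.range g) := by
    refine ⟨4 * ((S1.card : ℝ) + S2.card) + |aR T r Y|, ?_⟩
    rintro _ ⟨w, rfl⟩
    have := (abs_le.1 (hbound w)).2
    have h2 := (abs_le.1 (le_refl |aR T r Y|)).1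
    linarith [neg_abs_le (aR T r Y)]
  have hbng : BddAbove (Set.range fun w => -g w) := by
    refine ⟨4 * ((S1.card : ℝ) + S2.card) + |aR T r Y|, ?_⟩
    rintro _ ⟨w, rfl⟩
    show -g w ≤ _
    have := (abs_le.1 (hbound w)).1
    linarith [le_abs_self (aR T r Y)]
  -- pointwise rewrite of the integrand
  have hc : ((2 * r : ℕ) : ℝ) = 2 * r := by push_cast; ring
  have hrpos : (0:ℝ) < r := by exact_mod_cast hr1
  have hpoint : ∀ w : {w : EuclideanSpace ℝ (Fin d) // ‖w‖ ≤ 1},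
      |(r : ℝ)⁻¹ * ∑ t ∈ S1, sqLoss w.1 (X t, Y t)
        - ((2 * r : ℕ) : ℝ)⁻¹ * ∑ t ∈ Finset.Icc (T - 2 * r + 1) T, sqLoss w.1 (X t, Y t)|
        = ((2 * r : ℕ) : ℝ)⁻¹ * |aR T r Y + g w| := by
    intro w
    rw [hsplit, hc, ← hkey w]
    set A := ∑ t ∈ S1, sqLoss w.1 (X t, Y t) with hA
    set B := ∑ t ∈ S2, sqLoss w.1 (X t, Y t) with hB
    have hr0 : (r : ℝ) ≠ 0 := ne_of_gt hrpos
    have e : (r : ℝ)⁻¹ * A - (2 * (r : ℝ))⁻¹ * (B + A) = (2 * (r : ℝ))⁻¹ * (A - B) := by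
      field_simp
      ring
    rw [e, abs_mul, abs_of_nonneg (by positivity : (0:ℝ) ≤ (2 * (r : ℝ))⁻¹)]
  calc (⨆ w : {w : EuclideanSpace ℝ (Fin d) // ‖w‖ ≤ 1},
      |(r : ℝ)⁻¹ * ∑ t ∈ S1, sqLoss w.1 (X t, Y t)
        - ((2 * r : ℕ) : ℝ)⁻¹ * ∑ t ∈ Finset.Icc (T - 2 * r + 1) T, sqLoss w.1 (X t, Y t)|)
      = ⨆ w, ((2 * r : ℕ) : ℝ)⁻¹ * |aR T r Y + g w| := by
        exact iSup_congr hpoint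
    _ = ((2 * r : ℕ) : ℝ)⁻¹ * ⨆ w, |aR T r Y + g w| := by
        rw [Real.mul_iSup_of_nonneg (by positivity)]
    _ = ((2 * r : ℕ) : ℝ)⁻¹ * max
          (aR T r Y + ⨆ w, g w) (-aR T r Y + ⨆ w, -g w) := by
        congr 1
        rw [my_iSup_abs (fun w => aR T r Y + g w) hbound]
        rw [my_add_ciSup g hbg, my_add_ciSup (fun w => -g w) hbng]
        congr 1
        exact iSup_congr fun i => by ring
    _ = _ := by
        have h2 : (⨆ w, -g w) = ⨆ w : {w : EuclideanSpace ℝ (Fin d) // ‖w‖ ≤ 1},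
            (-qAR T r X w.1 - 2 * ⟪bR T r X Y, w.1⟫) :=
          iSup_congr fun w => by simp only [hg]; ring
        have h1 : (⨆ w, g w) = ⨆ w : {w : EuclideanSpace ℝ (Fin d) // ‖w‖ ≤ 1},
            (qAR T r X w.1 + 2 * ⟪bR T r X Y, w.1⟫) :=
          iSup_congr fun w => by simp only [hg]
        rw [h1, h2]
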